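/- Let λ = e^{iθ} with θ an irrational multiple of 2π (so λ is not a root of unity). Then there exist formal power series q(t) = Σ_{k≥0} q_{2k} t^{2k} with q₀ = 1, and φ(z,z̄) = Σ_{n≥0} Σ_{j+k=2n+1} φ_{j,k} z^j z̄^k with φ_{j,k} = φ_{k,j} and φ = z + z̄ + O₃, solving ℰ(q,φ) = 0 as formal power series in z, z̄. -/

import Mathlib

/-!
The coefficients are found degree by degree. For even `q` and odd `φ`, `ℰ(q,φ)` is odd, it is
invariant under `z ↔ z̄` when `φ` is, and its part of degree `d` only involves `q` up to degree
`d + 1` and `φ` up to degree `d`. In degree `d = 2n+1`, adding `s t^{d+1}` to `q` adds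
`s · qCoeff` to `ℰ`, and `qCoeff ≠ 0` at `(n+1, n)`; adding `w z^j z̄^k` to `φ` adds
`linCoeff (j - k) · w` to `ℰ_{j,k}`. Once `ℰ_{1,0} = 0`, `linCoeff ν` is a nonzero multiple
of `λ^ν + λ^{-ν} - λ - λ⁻¹ = λ^{-ν} (λ^ν - λ) (λ^ν - λ⁻¹)`, which does not vanish for
`ν ≠ ±1` because `λ` is not a root of unity. So `q_{2n+2}` kills the central coefficients
`ℰ_{n+1,n} = ℰ_{n,n+1}` and the degree-`2n+1` part of `φ` kills all the others.
-/

/- Common setup: formal power series in two commuting variables `z, z̄` over `ℂ`,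
represented by their coefficient functions, together with the operators of
Treschev's linearizable billiard construction. -/

open scoped BigOperators

noncomputable section

namespace Treschev

/-- A formal power series `f = Σ_{j,k≥0} f_{j,k} z^j z̄^k`, given by its coefficients. -/
abbrev FPS : Type := ℕ → ℕ → ℂ

/-- A formal power series in one variable `t`, given by its coefficients. -/
abbrev OPS : Type := ℕ → ℂ

/-- Product of two formal power series (Cauchy product). -/
def fmul (f g : FPS) : FPS := fun j k =>
  ∑ a ∈ Finset.range (j + 1), ∑ b ∈ Finset.range (k + 1), f a b * g (j - a) (k - b)

/-- The constant series `1`. -/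
def oneF : FPS := fun j k => if j = 0 ∧ k = 0 then 1 else 0

/-- Powers of a formal power series. -/
def fpow (f : FPS) : ℕ → FPS
  | 0 => oneF
  | n + 1 => fmul f (fpow f n)

/-- Substitution of a two-variable series `u` with zero constant term into a
one-variable series `q` (the formula is the correct one whenever `u 0 0 = 0`). -/
def substOne (q : OPS) (u : FPS) : FPS := fun j k =>
  ∑ m ∈ Finset.range (j + k + 1), q m * fpow u m j k

/-- Substitution `F(u, v)` of two series with zero constant term into a two-variable
series `F` (the formula is the correct one whenever `u 0 0 = 0` and `v 0 0 = 0`). -/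
def subst2 (F : FPS) (u v : FPS) : FPS := fun j k =>
  ∑ m ∈ Finset.range (j + k + 1), ∑ n ∈ Finset.range (j + k + 1),
    F m n * fmul (fpow u m) (fpow v n) j k

/-- The Taylor series of `cos`. -/
def cosSeries : OPS := fun n => if n % 2 = 0 then (-1 : ℂ) ^ (n / 2) / (n.factorial : ℂ) else 0

/-- `(t₁ + t₂)/2` as a two-variable series. -/
def halfSum : FPS := fun j k =>
  if j = 1 ∧ k = 0 then (1 / 2 : ℂ) else if j = 0 ∧ k = 1 then (1 / 2 : ℂ) else 0

/-- `(t₁ − t₂)/2` as a two-variable series. -/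
def halfDiff : FPS := fun j k =>
  if j = 1 ∧ k = 0 then (1 / 2 : ℂ) else if j = 0 ∧ k = 1 then (-(1 / 2) : ℂ) else 0

/-- The generating function `S_q(t₁,t₂) = q((t₁+t₂)/2)·cos((t₁−t₂)/2)` as a
formal power series in `t₁, t₂`. -/
def Sq (q : OPS) : FPS := fmul (substOne q halfSum) (substOne cosSeries halfDiff)

/-- Formal partial derivative with respect to the first variable. -/
def d1 (f : FPS) : FPS := fun j k => ((j + 1 : ℕ) : ℂ) * f (j + 1) k

/-- Formal partial derivative with respect to the second variable. -/
def d2 (f : FPS) : FPS := fun j k => ((k + 1 : ℕ) : ℂ) * f j (k + 1)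

/-- `f⁺`, with `(f⁺)_{j,k} = λ^{j−k} f_{j,k}`. -/
def plus (l : ℂ) (f : FPS) : FPS := fun j k => l ^ ((j : ℤ) - (k : ℤ)) * f j k

/-- `f⁻`, with `(f⁻)_{j,k} = λ^{k−j} f_{j,k}`. -/
def minus (l : ℂ) (f : FPS) : FPS := fun j k => l ^ ((k : ℤ) - (j : ℤ)) * f j k

/-- `∇f = f⁻ − λ⁻¹ f`. -/
def nab (l : ℂ) (f : FPS) : FPS := minus l f - l⁻¹ • f

/-- `∇⁺f = f − λ f⁺`. -/
def nabPlus (l : ℂ) (f : FPS) : FPS := f - l • plus l f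

/-- The average `[f] = Σ_j f_{j,j} (z z̄)^j`. -/
def avg (f : FPS) : FPS := fun j k => if j = k then f j k else 0

/-- The projection `Π₊(f) = [z f]/z`. -/
def Pip (f : FPS) : FPS := fun j k => if k = j + 1 then f j k else 0

/-- The projection `Π(f) = [z̄ f]/z̄`. -/
def Pim (f : FPS) : FPS := fun j k => if j = k + 1 then f j k else 0

/-- `E⁺`, the partial inverse of `∇⁺`. -/
def Eplus (l : ℂ) (f : FPS) : FPS := fun j k =>
  if k = j + 1 then 0 else f j k / (1 - l ^ ((j : ℤ) - (k : ℤ) + 1))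

/-- `E`, the partial inverse of `∇`. -/
def Emin (l : ℂ) (f : FPS) : FPS := fun j k =>
  if j = k + 1 then 0 else f j k / (l ^ ((k : ℤ) - (j : ℤ)) - l⁻¹)

/-- `Ẽ`, with `Ẽ(f − f⁺) = f − [f]`. -/
def Etilde (l : ℂ) (f : FPS) : FPS := fun j k =>
  if j = k then 0 else f j k / (1 - l ^ ((j : ℤ) - (k : ℤ)))

/-- `f ∘ I`, where `I(z,z̄) = (z̄,z)`. -/
def swapI (f : FPS) : FPS := fun j k => f k j

/-- Multiplication by `z`. -/
def mulz (f : FPS) : FPS := fun j k => if j = 0 then 0 else f (j - 1) k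

/-- Multiplication by `z̄`. -/
def mulzbar (f : FPS) : FPS := fun j k => if k = 0 then 0 else f j (k - 1)

/-- Division by `z` (valid on series divisible by `z`). -/
def divz (f : FPS) : FPS := fun j k => f (j + 1) k

/-- Multiplicative inverse `1/h` (the geometric-series formula, which is the correct
inverse whenever `h 0 0 ≠ 0`). -/
def finv (h : FPS) : FPS := fun j k =>
  (h 0 0)⁻¹ * ∑ m ∈ Finset.range (j + k + 1),
    fpow (fun a b => if a = 0 ∧ b = 0 then 0 else -(h a b) * (h 0 0)⁻¹) m j k

/-- Quotient `f/h` of formal power series. -/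
def fdiv (f h : FPS) : FPS := fmul f (finv h)

/-- `ℰ(q,φ) = ∂₂S_q(φ⁻,φ) + ∂₁S_q(φ,φ⁺)`. -/
def Err (l : ℂ) (q : OPS) (φ : FPS) : FPS :=
  subst2 (d2 (Sq q)) (minus l φ) φ + subst2 (d1 (Sq q)) φ (plus l φ)

/-- `∂_φℰ(q,φ)(w) = ∂₁₂S_q(φ⁻,φ)w⁻ + ∂₂₂S_q(φ⁻,φ)w + ∂₁₁S_q(φ,φ⁺)w + ∂₁₂S_q(φ,φ⁺)w⁺`. -/
def dErr (l : ℂ) (q : OPS) (φ : FPS) (w : FPS) : FPS :=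
  fmul (subst2 (d1 (d2 (Sq q))) (minus l φ) φ) (minus l w)
    + fmul (subst2 (d2 (d2 (Sq q))) (minus l φ) φ) w
    + fmul (subst2 (d1 (d1 (Sq q))) φ (plus l φ)) w
    + fmul (subst2 (d1 (d2 (Sq q))) φ (plus l φ)) (plus l w)

/-- `h = ∂₁₂S_q(φ⁻,φ)·φ_z·φ_z⁻`. -/
def hFun (l : ℂ) (q : OPS) (φ : FPS) : FPS :=
  fmul (fmul (subst2 (d1 (d2 (Sq q))) (minus l φ) φ) (d1 φ)) (minus l (d1 φ))

/-- `ψ = −E⁺( ℰ(q,φ)·φ_z − Π₊(ℰ(q,φ)·φ_z) )`. -/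
def psiFun (l : ℂ) (q : OPS) (φ : FPS) : FPS :=
  -Eplus l (fmul (Err l q φ) (d1 φ) - Pip (fmul (Err l q φ) (d1 φ)))

/-- `w = φ_z·E( ψ/h − Π(ψ/h) )`. -/
def wFun (l : ℂ) (q : OPS) (φ : FPS) : FPS :=
  fmul (d1 φ)
    (Emin l (fdiv (psiFun l q φ) (hFun l q φ) - Pim (fdiv (psiFun l q φ) (hFun l q φ))))

/-- `κ = ∂₁₂S_q(φ⁻,φ)·(λ⁻¹ φ_z⁻ φ_z̄ − λ φ_z̄⁻ φ_z)`. -/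
def kappaFun (l : ℂ) (q : OPS) (φ : FPS) : FPS :=
  fmul (subst2 (d1 (d2 (Sq q))) (minus l φ) φ)
    (l⁻¹ • fmul (minus l (d1 φ)) (d2 φ) - l • fmul (minus l (d2 φ)) (d1 φ))

/-- `g = φ_z̄ / φ_z`. -/
def gFun (φ : FPS) : FPS := fdiv (d2 φ) (d1 φ)

/-- `R₁ = ( −[z̄·ℰ·φ_z̄] + [z̄·g·[z·ℰ·φ_z]/z] ) / ( λ·z·[κ] )`. -/
def R1Fun (l : ℂ) (q : OPS) (φ : FPS) : FPS :=
  l⁻¹ • fmul (finv (avg (kappaFun l q φ)))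
    (divz (-avg (mulzbar (fmul (Err l q φ) (d2 φ)))
      + avg (mulzbar (fmul (gFun φ) (divz (avg (mulz (fmul (Err l q φ) (d1 φ)))))))))

/-- `R₂ = (1/z)·[ z̄·ψ·(λ⁻¹g − λg⁻)·([κ]−κ)/(κ·[κ]) ]`. -/
def R2Fun (l : ℂ) (q : OPS) (φ : FPS) : FPS :=
  divz (avg (mulzbar
    (fmul (fmul (psiFun l q φ) (l⁻¹ • gFun φ - l • minus l (gFun φ)))
      (fmul (avg (kappaFun l q φ) - kappaFun l q φ)
        (finv (fmul (kappaFun l q φ) (avg (kappaFun l q φ))))))))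

/-- `R₃ = [z·∂_z(S_q(φ⁻,φ))]/z − ∇⁺( h·Π(ψ/h) )`. -/
def R3Fun (l : ℂ) (q : OPS) (φ : FPS) : FPS :=
  Pip (d1 (subst2 (Sq q) (minus l φ) φ))
    - nabPlus l (fmul (hFun l q φ) (Pim (fdiv (psiFun l q φ) (hFun l q φ))))

/-- `R₄ = ∂_z(ℰ(q,φ))·(w/φ_z) + R₃/φ_z`. -/
def R4Fun (l : ℂ) (q : OPS) (φ : FPS) : FPS :=
  fmul (d1 (Err l q φ)) (fdiv (wFun l q φ) (d1 φ)) + fdiv (R3Fun l q φ) (d1 φ)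

/-- `φ = z + z̄ + O₃`. -/
def normalized (φ : FPS) : Prop :=
  φ 0 0 = 0 ∧ φ 1 0 = 1 ∧ φ 0 1 = 1 ∧ φ 2 0 = 0 ∧ φ 1 1 = 0 ∧ φ 0 2 = 0

/-- The weighted norm `‖f‖_ρ = Σ_{j,k} |f_{j,k}| ρ^{j+k} ∈ [0,∞]`. -/
def wnorm (ρ : ℝ) (f : FPS) : ENNReal :=
  ∑' p : ℕ × ℕ, ENNReal.ofReal (‖f p.1 p.2‖ * ρ ^ (p.1 + p.2))

/-- `D(f) = Σ_{n≥1} n f_n (z z̄)^n` for a series in `z z̄`. -/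
def Dop (f : FPS) : FPS := fun j k => if j = k then (j : ℂ) * f j k else 0

/-- `D̄(f − f₀) = Σ_{n≥1} (f_n/n) (z z̄)^n` for a series in `z z̄`. -/
def Dbar (f : FPS) : FPS := fun j k => if j = k ∧ j ≠ 0 then f j k / (j : ℂ) else 0

/-- The constant part `f₀` of a series. -/
def constPart (f : FPS) : FPS := fun j k => if j = 0 ∧ k = 0 then f 0 0 else 0

/-- `ξ₀ = ((λ⁻¹+1)z + (λ+1)z̄)/2`. -/
def xi0 (l : ℂ) : FPS := fun a b =>
  if a = 1 ∧ b = 0 then (l⁻¹ + 1) / 2 else if a = 0 ∧ b = 1 then (l + 1) / 2 else 0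

/-! ### Products and powers via `PowerSeries (PowerSeries ℂ)` -/

def toPS (f : FPS) : PowerSeries (PowerSeries ℂ) :=
  PowerSeries.mk fun j => PowerSeries.mk (f j)

@[simp]
lemma coeff_toPS (f : FPS) (j k : ℕ) :
    PowerSeries.coeff k (PowerSeries.coeff j (toPS f)) = f j k := by
  simp [toPS]

lemma toPS_injective : Function.Injective toPS := fun f g h => by
  funext j k
  simpa using congrArg (fun x => PowerSeries.coeff k (PowerSeries.coeff j x)) h

lemma toPS_ext {x y : PowerSeries (PowerSeries ℂ)}
    (h : ∀ j k, PowerSeries.coeff k (PowerSeries.coeff j x) =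
      PowerSeries.coeff k (PowerSeries.coeff j y)) : x = y :=
  PowerSeries.ext fun j => PowerSeries.ext fun k => h j k

lemma toPS_fmul (f g : FPS) : toPS (fmul f g) = toPS f * toPS g := by
  refine toPS_ext fun j k => ?_
  simp only [coeff_toPS, fmul, PowerSeries.coeff_mul, map_sum,
    Finset.Nat.sum_antidiagonal_eq_sum_range_succ_mk]

lemma toPS_oneF : toPS oneF = 1 := by
  refine toPS_ext fun j k => ?_
  rw [coeff_toPS, PowerSeries.coeff_one]
  rcases j with _ | j <;> rcases k with _ | k <;> simp [oneF, PowerSeries.coeff_one]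

lemma fpow_succ (f : FPS) (n : ℕ) : fpow f (n + 1) = fmul f (fpow f n) := rfl

lemma toPS_fpow (f : FPS) (m : ℕ) : toPS (fpow f m) = toPS f ^ m := by
  induction m with
  | zero => exact toPS_oneF
  | succ n ih => rw [fpow_succ, toPS_fmul, ih, pow_succ']

lemma toPS_add (f g : FPS) : toPS (f + g) = toPS f + toPS g :=
  toPS_ext fun j k => by simp

lemma fmul_comm (f g : FPS) : fmul f g = fmul g f :=
  toPS_injective (by rw [toPS_fmul, toPS_fmul, mul_comm])

lemma fmul_oneF (f : FPS) : fmul f oneF = f :=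
  toPS_injective (by rw [toPS_fmul, toPS_oneF, mul_one])

lemma oneF_fmul (f : FPS) : fmul oneF f = f := by
  rw [fmul_comm, fmul_oneF]

lemma fpow_zero (f : FPS) : fpow f 0 = oneF := rfl

lemma fpow_one (f : FPS) : fpow f 1 = f := fmul_oneF f

lemma fpow_add_apply (f g : FPS) (M j k : ℕ) :
    fpow (f + g) M j k
      = ∑ m ∈ Finset.range (M + 1),
          (M.choose m : ℂ) * fmul (fpow f m) (fpow g (M - m)) j k := by
  have h : toPS (fpow (f + g) M) = ∑ m ∈ Finset.range (M + 1),
      M.choose m • toPS (fmul (fpow f m) (fpow g (M - m))) := by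
    simp only [toPS_fpow, toPS_add, add_pow, toPS_fmul, nsmul_eq_mul]
    exact Finset.sum_congr rfl fun m _ => by ring
  have := congrArg (fun x => PowerSeries.coeff k (PowerSeries.coeff j x)) h
  rw [map_sum, map_sum] at this
  simp only [map_nsmul, coeff_toPS] at this
  simpa only [nsmul_eq_mul] using this

lemma fmul_add_smul_left (f g h : FPS) (s : ℂ) :
    fmul (f + s • g) h = fmul f h + s • fmul g h := by
  funext j k
  simp only [fmul, Pi.add_apply, Pi.smul_apply, smul_eq_mul, add_mul, Finset.sum_add_distrib,
    Finset.mul_sum, mul_assoc]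

lemma fpow_zero_left_succ (m : ℕ) : fpow 0 (m + 1) = 0 := by
  funext j k
  simp [fpow_succ, fmul]

/-! ### Order, agreement and parity of coefficients -/

/-- `f = O_N`. -/
def VanishesBelow (N : ℕ) (f : FPS) : Prop := ∀ j k, j + k < N → f j k = 0

def EqBelow (N : ℕ) (f g : FPS) : Prop := ∀ j k, j + k < N → f j k = g j k

def HasParity (p : ℕ) (f : FPS) : Prop := ∀ j k, (j + k) % 2 ≠ p % 2 → f j k = 0

lemma vanishesBelow_zero (f : FPS) : VanishesBelow 0 f := fun _ _ h =>
  absurd h (Nat.not_lt_zero _)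

lemma vanishesBelow_one {f : FPS} (h : f 0 0 = 0) : VanishesBelow 1 f := fun j k hjk => by
  obtain ⟨rfl, rfl⟩ : j = 0 ∧ k = 0 := by omega
  exact h

lemma fmul_eqBelow {f f' g g' : FPS} {p q a : ℕ}
    (hf : VanishesBelow p f) (hf' : VanishesBelow p f') (hff' : EqBelow (p + a) f f')
    (hg : VanishesBelow q g) (hg' : VanishesBelow q g') (hgg' : EqBelow (q + a) g g') :
    EqBelow (p + q + a) (fmul f g) (fmul f' g') := fun j k hjk => by
  refine Finset.sum_congr rfl fun b hb => Finset.sum_congr rfl fun c hc => ?_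
  simp only [Finset.mem_range] at hb hc
  by_cases hbc : b + c < p
  · rw [hf b c hbc, hf' b c hbc, zero_mul, zero_mul]
  by_cases hrest : j - b + (k - c) < q
  · rw [hg _ _ hrest, hg' _ _ hrest, mul_zero, mul_zero]
  rw [hff' b c (by omega), hgg' _ _ (by omega)]

lemma fmul_vanishesBelow {f g : FPS} {p q : ℕ} (hf : VanishesBelow p f) (hg : VanishesBelow q g) :
    VanishesBelow (p + q) (fmul f g) := fun j k hjk => by
  refine Finset.sum_eq_zero fun b hb => Finset.sum_eq_zero fun c hc => ?_
  simp only [Finset.mem_range] at hb hc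
  by_cases hbc : b + c < p
  · rw [hf b c hbc, zero_mul]
  · rw [hg _ _ (by omega), mul_zero]

lemma fpow_vanishesBelow {u : FPS} (hu : u 0 0 = 0) (m : ℕ) : VanishesBelow m (fpow u m) := by
  induction m with
  | zero => exact vanishesBelow_zero _
  | succ n ih => rw [fpow_succ, Nat.add_comm]; exact fmul_vanishesBelow (vanishesBelow_one hu) ih

lemma fpow_eqBelow {u u' : FPS} {a : ℕ} (hu : u 0 0 = 0) (hu' : u' 0 0 = 0)
    (h : EqBelow (1 + a) u u') (m : ℕ) : EqBelow (m + a) (fpow u m) (fpow u' m) := by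
  induction m with
  | zero => exact fun _ _ _ => rfl
  | succ n ih =>
    rw [fpow_succ, fpow_succ, Nat.add_comm n 1]
    exact fmul_eqBelow (vanishesBelow_one hu) (vanishesBelow_one hu') h
      (fpow_vanishesBelow hu n) (fpow_vanishesBelow hu' n) ih

lemma fmul_fpow_eqBelow {u u' v v' : FPS} {a : ℕ} (hu : u 0 0 = 0) (hu' : u' 0 0 = 0)
    (hv : v 0 0 = 0) (hv' : v' 0 0 = 0) (huu' : EqBelow (1 + a) u u')
    (hvv' : EqBelow (1 + a) v v') (m n : ℕ) :
    EqBelow (m + n + a) (fmul (fpow u m) (fpow v n)) (fmul (fpow u' m) (fpow v' n)) :=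
  fmul_eqBelow (fpow_vanishesBelow hu m) (fpow_vanishesBelow hu' m) (fpow_eqBelow hu hu' huu' m)
    (fpow_vanishesBelow hv n) (fpow_vanishesBelow hv' n) (fpow_eqBelow hv hv' hvv' n)

lemma fmul_hasParity {f g : FPS} {p q : ℕ} (hf : HasParity p f) (hg : HasParity q g) :
    HasParity (p + q) (fmul f g) := fun j k hjk => by
  refine Finset.sum_eq_zero fun b hb => Finset.sum_eq_zero fun c hc => ?_
  simp only [Finset.mem_range] at hb hc
  by_cases hbc : (b + c) % 2 = p % 2
  · rw [hg _ _ (by omega), mul_zero]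
  · rw [hf b c hbc, zero_mul]

lemma fpow_hasParity {u : FPS} (hu : HasParity 1 u) (m : ℕ) : HasParity m (fpow u m) := by
  induction m with
  | zero =>
    intro j k hjk
    simp only [fpow, oneF]
    rw [if_neg (by omega)]
  | succ n ih => rw [fpow_succ, Nat.add_comm]; exact fmul_hasParity hu ih

/-! ### Linear series and the generating function `S_q` -/

/-- `lin x y = x z + y z̄`. -/
def lin (x y : ℂ) : FPS := fun j k =>
  if j = 1 ∧ k = 0 then x else if j = 0 ∧ k = 1 then y else 0

lemma lin_eq_add (x y : ℂ) (j k : ℕ) : lin x y j k =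
    (if j = 1 ∧ k = 0 then x else 0) + (if j = 0 ∧ k = 1 then y else 0) := by
  unfold lin
  split_ifs <;> first | omega | simp

lemma lin_add (x₁ y₁ x₂ y₂ : ℂ) :
    lin x₁ y₁ + lin x₂ y₂ = lin (x₁ + x₂) (y₁ + y₂) := by
  funext j k
  simp only [Pi.add_apply, lin]
  split_ifs <;> ring

lemma fmul_lin (x y : ℂ) (g : FPS) (j k : ℕ) :
    fmul (lin x y) g j k
      = (if 0 < j then x * g (j - 1) k else 0) + (if 0 < k then y * g j (k - 1) else 0) := by
  simp only [fmul, lin_eq_add, add_mul, ite_mul, zero_mul, Finset.sum_add_distrib, ite_and]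
  simp [Finset.sum_ite_eq', Finset.mem_range]

lemma fpow_lin (x y : ℂ) (m j k : ℕ) :
    fpow (lin x y) m j k = if j + k = m then (m.choose j : ℂ) * x ^ j * y ^ k else 0 := by
  induction m generalizing j k with
  | zero =>
    simp only [fpow_zero, oneF, Nat.add_eq_zero_iff]
    split_ifs with h <;> simp [h]
  | succ n ih =>
    rw [fpow_succ, fmul_lin, ih, ih]
    rcases j with _ | j <;> rcases k with _ | k <;>
      simp [Nat.choose_succ_succ, pow_succ] <;> split_ifs <;> subst_vars <;>
      first | omega | ring1 | (rw [Nat.choose_succ_self]; ring)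

lemma eqBelow_two_lin {f : FPS} (h : f 0 0 = 0) : EqBelow 2 f (lin (f 1 0) (f 0 1)) :=
  fun j k hjk => by
    rcases (by omega : j = 0 ∧ k = 0 ∨ j = 1 ∧ k = 0 ∨ j = 0 ∧ k = 1) with
      ⟨rfl, rfl⟩ | ⟨rfl, rfl⟩ | ⟨rfl, rfl⟩ <;> simp [lin, h]

lemma halfSum_eq : halfSum = lin (1 / 2) (1 / 2) := rfl

lemma halfDiff_eq : halfDiff = lin (1 / 2) (-(1 / 2)) := rfl

lemma substOne_lin (q : OPS) (x y : ℂ) (j k : ℕ) :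
    substOne q (lin x y) j k = q (j + k) * ((j + k).choose j : ℂ) * x ^ j * y ^ k := by
  rw [substOne, Finset.sum_eq_single_of_mem (j + k) (Finset.self_mem_range_succ _)]
  · rw [fpow_lin, if_pos rfl]; ring
  · intro m _ hm
    rw [fpow_lin, if_neg (Ne.symm hm), mul_zero]

lemma substOne_lin_swap (q : OPS) (x y : ℂ) (j k : ℕ) :
    substOne q (lin x y) k j = substOne q (lin y x) j k := by
  rw [substOne_lin, substOne_lin, Nat.add_comm k j, Nat.choose_symm_of_eq_add rfl]
  ring

lemma substOne_lin_neg {q : OPS} (hq : ∀ m, m % 2 = 1 → q m = 0) (x y : ℂ) :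
    substOne q (lin (-x) (-y)) = substOne q (lin x y) := by
  funext j k
  rw [substOne_lin, substOne_lin, neg_pow, neg_pow]
  rcases Nat.mod_two_eq_zero_or_one (j + k) with h | h
  · have : (-1 : ℂ) ^ j * (-1) ^ k = 1 := by
      rw [← pow_add, Even.neg_one_pow (Nat.even_iff.mpr h)]
    linear_combination q (j + k) * ((j + k).choose j : ℂ) * x ^ j * y ^ k * this
  · rw [hq _ h]; ring

lemma substOne_lin_hasParity {q : OPS} (hq : ∀ m, m % 2 = 1 → q m = 0) (x y : ℂ) :
    HasParity 0 (substOne q (lin x y)) := fun j k hjk => by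
  rw [substOne_lin, hq _ (by omega)]; ring

lemma substOne_add_single {u : FPS} (hu : u 0 0 = 0) (q : OPS) (i : ℕ) (s : ℂ) :
    substOne (q + Pi.single i s) u = substOne q u + s • fpow u i := by
  funext j k
  simp only [substOne, Pi.add_apply, add_mul, Finset.sum_add_distrib, Pi.single_apply,
    ite_mul, zero_mul, Finset.sum_ite_eq', Finset.mem_range, Pi.smul_apply, smul_eq_mul]
  split_ifs with h
  · rfl
  · rw [fpow_vanishesBelow hu i j k (by omega), mul_zero]

lemma fmul_swapI (f g : FPS) : swapI (fmul f g) = fmul (swapI f) (swapI g) := by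
  funext j k
  simp only [swapI, fmul]
  exact Finset.sum_comm

lemma swapI_oneF : swapI oneF = oneF := by
  funext j k
  simp only [swapI, oneF, and_comm]

lemma swapI_fpow (u : FPS) (m : ℕ) : swapI (fpow u m) = fpow (swapI u) m := by
  induction m with
  | zero => exact swapI_oneF
  | succ n ih => rw [fpow_succ, fpow_succ, fmul_swapI, ih]

lemma swapI_Sq (q : OPS) : swapI (Sq q) = Sq q := by
  have hcos : ∀ m, m % 2 = 1 → cosSeries m = 0 := fun m hm => by simp [cosSeries, hm]
  have swap_lin : ∀ (p : OPS) (x y : ℂ), swapI (substOne p (lin x y)) = substOne p (lin y x) :=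
    fun p x y => funext₂ fun j k => substOne_lin_swap p x y j k
  rw [Sq, fmul_swapI, halfSum_eq, halfDiff_eq, swap_lin, swap_lin,
    ← substOne_lin_neg hcos (-(1 / 2)), neg_neg]

lemma Sq_hasParity {q : OPS} (hq : ∀ m, m % 2 = 1 → q m = 0) : HasParity 0 (Sq q) := by
  have hcos : ∀ m, m % 2 = 1 → cosSeries m = 0 := fun m hm => by simp [cosSeries, hm]
  exact fmul_hasParity (substOne_lin_hasParity hq _ _) (substOne_lin_hasParity hcos _ _)

lemma Sq_eqBelow {q q' : OPS} {N : ℕ} (h : ∀ m < N, q m = q' m) : EqBelow N (Sq q) (Sq q') := by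
  have hq : EqBelow N (substOne q halfSum) (substOne q' halfSum) := fun j k hjk => by
    rw [halfSum_eq, substOne_lin, substOne_lin, h _ hjk]
  simpa [Sq] using fmul_eqBelow (a := N) (vanishesBelow_zero _) (vanishesBelow_zero _)
    (by simpa using hq) (vanishesBelow_zero _) (vanishesBelow_zero _) (fun _ _ _ => rfl)

lemma Sq_degree_two (q : OPS) : 2 * Sq q 0 2 + 2 * Sq q 2 0 = 2 * Sq q 1 1 - q 0 := by
  simp only [Sq, fmul, Finset.sum_range_succ, Finset.sum_range_zero, halfSum_eq, halfDiff_eq,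
    substOne_lin]
  norm_num [cosSeries, Nat.factorial]
  ring

/-- `((t₁ + t₂)/2)^i cos((t₁ − t₂)/2)`, the derivative of `S_q` with respect to `q_i`. -/
def halfSumPowCos (i : ℕ) : FPS := fmul (fpow halfSum i) (substOne cosSeries halfDiff)

lemma Sq_add_single (q : OPS) (i : ℕ) (s : ℂ) :
    Sq (q + Pi.single i s) = Sq q + s • halfSumPowCos i := by
  rw [Sq, Sq, substOne_add_single rfl, fmul_add_smul_left, halfSumPowCos]

lemma halfSumPowCos_vanishesBelow (i : ℕ) : VanishesBelow i (halfSumPowCos i) := by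
  simpa [halfSumPowCos] using
    fmul_vanishesBelow (fpow_vanishesBelow (u := halfSum) rfl i) (vanishesBelow_zero _)

lemma halfSumPowCos_top {i m n : ℕ} (h : m + n = i) :
    halfSumPowCos i m n = i.choose m * (1 / 2) ^ i := by
  have hcos : EqBelow 1 (substOne cosSeries halfDiff) oneF := fun j k hjk => by
    obtain ⟨rfl, rfl⟩ : j = 0 ∧ k = 0 := by omega
    simp [halfDiff_eq, substOne_lin, cosSeries, oneF]
  have := fmul_eqBelow (a := 1) (fpow_vanishesBelow (u := halfSum) rfl i)
    (fpow_vanishesBelow (u := halfSum) rfl i) (fun _ _ _ => rfl)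
    (vanishesBelow_zero _) (vanishesBelow_zero _) (by simpa using hcos) m n (by omega)
  rw [halfSumPowCos, this, fmul_oneF, halfSum_eq, fpow_lin, if_pos h, ← h, pow_add]
  ring

lemma d1_halfSumPowCos_top {d m n : ℕ} (h : m + n = d) :
    d1 (halfSumPowCos (d + 1)) m n = ((d + 1) * (1 / 2) ^ (d + 1)) * d.choose m := by
  have hc : (((m + 1 : ℕ) * (d + 1).choose (m + 1) : ℕ) : ℂ) =
      ((d + 1) * d.choose m : ℕ) := by
    rw [Nat.add_one_mul_choose_eq, Nat.mul_comm]
  push_cast at hc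
  rw [d1, halfSumPowCos_top (by omega)]
  push_cast
  linear_combination (1 / 2 : ℂ) ^ (d + 1) * hc

lemma d2_halfSumPowCos_top {d m n : ℕ} (h : m + n = d) :
    d2 (halfSumPowCos (d + 1)) m n = ((d + 1) * (1 / 2) ^ (d + 1)) * d.choose m := by
  have hc : (((n + 1 : ℕ) * (d + 1).choose m : ℕ) : ℂ) = ((d + 1) * d.choose m : ℕ) := by
    rw [show n + 1 = d + 1 - m by omega, Nat.mul_comm, ← Nat.choose_mul_succ_eq, Nat.mul_comm]
  push_cast at hc
  rw [d2, halfSumPowCos_top (by omega)]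
  push_cast
  linear_combination (1 / 2 : ℂ) ^ (d + 1) * hc

/-! ### Substitution -/

lemma subst2_add_smul (F G u v : FPS) (s : ℂ) :
    subst2 (F + s • G) u v = subst2 F u v + s • subst2 G u v := by
  funext j k
  simp only [subst2, Pi.add_apply, Pi.smul_apply, smul_eq_mul, add_mul, Finset.sum_add_distrib,
    Finset.mul_sum, mul_assoc]

lemma subst2_zero_zero (F : FPS) (j k : ℕ) : subst2 F 0 0 j k = F 0 0 * oneF j k := by
  have hpow : ∀ m, m ≠ 0 → fpow (0 : FPS) m = 0 := fun m hm => by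
    obtain ⟨m, rfl⟩ := Nat.exists_eq_succ_of_ne_zero hm
    exact fpow_zero_left_succ m
  rw [subst2, Finset.sum_eq_single_of_mem 0 (by simp), Finset.sum_eq_single_of_mem 0 (by simp)]
  · rw [fpow_zero, oneF_fmul]
  · intro n _ hn
    rw [hpow n hn, fmul_comm]
    simp [fmul]
  · intro m _ hm
    refine Finset.sum_eq_zero fun n _ => ?_
    rw [hpow m hm]
    simp [fmul]

lemma subst2_eqBelow {F F' u u' v v' : FPS} {N : ℕ} (hF : EqBelow N F F')
    (hu : u 0 0 = 0) (hu' : u' 0 0 = 0) (hv : v 0 0 = 0) (hv' : v' 0 0 = 0)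
    (huu' : EqBelow N u u') (hvv' : EqBelow N v v') :
    EqBelow N (subst2 F u v) (subst2 F' u' v') := fun j k hjk => by
  refine Finset.sum_congr rfl fun m _ => Finset.sum_congr rfl fun n _ => ?_
  by_cases hmn : j + k < m + n
  · rw [fmul_vanishesBelow (fpow_vanishesBelow hu m) (fpow_vanishesBelow hv n) j k hmn,
      fmul_vanishesBelow (fpow_vanishesBelow hu' m) (fpow_vanishesBelow hv' n) j k hmn,
      mul_zero, mul_zero]
  rw [hF m n (by omega)]
  rcases Nat.eq_zero_or_pos (m + n) with h0 | hpos
  · obtain ⟨rfl, rfl⟩ : m = 0 ∧ n = 0 := by omega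
    rfl
  · obtain ⟨a, rfl⟩ : ∃ a, N = 1 + a := ⟨N - 1, by omega⟩
    rw [fmul_fpow_eqBelow hu hu' hv hv' huu' hvv' m n j k (by omega)]

lemma subst2_perturb (F : FPS) {u u' v v' : FPS} {d : ℕ} (hd : 1 ≤ d)
    (hu : u 0 0 = 0) (hu' : u' 0 0 = 0) (hv : v 0 0 = 0) (hv' : v' 0 0 = 0)
    (huu' : EqBelow d u u') (hvv' : EqBelow d v v') {j k : ℕ} (hjk : j + k = d) :
    subst2 F u' v' j k
      = subst2 F u v j k + F 1 0 * (u' j k - u j k) + F 0 1 * (v' j k - v j k) := by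
  obtain ⟨a, rfl⟩ : ∃ a, d = 1 + a := ⟨d - 1, by omega⟩
  have term : ∀ m n, F m n * fmul (fpow u' m) (fpow v' n) j k
      = F m n * fmul (fpow u m) (fpow v n) j k
        + ((if m = 1 ∧ n = 0 then F 1 0 * (u' j k - u j k) else 0)
          + (if m = 0 ∧ n = 1 then F 0 1 * (v' j k - v j k) else 0)) := by
    intro m n
    by_cases h10 : m = 1 ∧ n = 0
    · obtain ⟨rfl, rfl⟩ := h10
      simp only [fpow_one, fpow_zero, fmul_oneF]
      rw [if_pos (by trivial), if_neg (by omega)]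
      ring
    by_cases h01 : m = 0 ∧ n = 1
    · obtain ⟨rfl, rfl⟩ := h01
      simp only [fpow_one, fpow_zero, oneF_fmul]
      rw [if_neg (by omega), if_pos (by trivial)]
      ring
    rw [if_neg h10, if_neg h01, add_zero, add_zero]
    by_cases h00 : m = 0 ∧ n = 0
    · obtain ⟨rfl, rfl⟩ := h00
      rfl
    rw [fmul_fpow_eqBelow hu hu' hv hv' huu' hvv' m n j k (by omega)]
  simp only [subst2, term, Finset.sum_add_distrib, ite_and]
  simp only [Finset.sum_ite_irrel, Finset.sum_ite_eq', Finset.mem_range, Finset.sum_const_zero]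
  rw [if_pos (by omega), if_pos (by omega), if_pos (by omega), if_pos (by omega)]
  ring

lemma subst2_of_binomial {F : FPS} {d : ℕ} {c : ℂ} (hF : VanishesBelow d F)
    (hFd : ∀ m n, m + n = d → F m n = c * d.choose m) {u v : FPS} (hu : u 0 0 = 0)
    (hv : v 0 0 = 0) {x₁ y₁ x₂ y₂ : ℂ} (hu₁ : EqBelow 2 u (lin x₁ y₁))
    (hv₁ : EqBelow 2 v (lin x₂ y₂)) {j k : ℕ} (hjk : j + k = d) :
    subst2 F u v j k = c * d.choose j * (x₁ + x₂) ^ j * (y₁ + y₂) ^ k := by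
  have hl₁ : lin x₁ y₁ 0 0 = 0 := rfl
  have hl₂ : lin x₂ y₂ 0 0 = 0 := rfl
  have row : ∀ m ∈ Finset.range (d + 1),
      ∑ n ∈ Finset.range (d + 1), F m n * fmul (fpow u m) (fpow v n) j k
        = c * ((d.choose m : ℂ) *
            fmul (fpow (lin x₁ y₁) m) (fpow (lin x₂ y₂) (d - m)) j k) := by
    intro m hm
    rw [Finset.mem_range] at hm
    have hlin := fmul_fpow_eqBelow (a := 1) hu hl₁ hv hl₂ hu₁ hv₁ m (d - m) j k (by omega)
    rw [Finset.sum_eq_single_of_mem (d - m) (Finset.mem_range.mpr (by omega)),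
      hFd m (d - m) (by omega), hlin]
    · ring
    intro n _ hn
    rcases lt_or_gt_of_ne hn with h | h
    · rw [hF m n (by omega), zero_mul]
    · rw [fmul_vanishesBelow (fpow_vanishesBelow hu m) (fpow_vanishesBelow hv n) j k (by omega),
        mul_zero]
  rw [subst2, hjk, Finset.sum_congr rfl row, ← Finset.mul_sum, ← fpow_add_apply, lin_add,
    fpow_lin, if_pos hjk]
  ring

lemma subst2_hasParity {F u v : FPS} (hF : HasParity 1 F) (hu : HasParity 1 u)
    (hv : HasParity 1 v) : HasParity 1 (subst2 F u v) := fun j k hjk => by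
  refine Finset.sum_eq_zero fun m _ => Finset.sum_eq_zero fun n _ => ?_
  by_cases hmn : (m + n) % 2 = 1
  · rw [fmul_hasParity (fpow_hasParity hu m) (fpow_hasParity hv n) j k (by omega), mul_zero]
  · rw [hF m n (by omega), zero_mul]

lemma swapI_subst2 (F u v : FPS) :
    swapI (subst2 F u v) = subst2 (swapI F) (swapI v) (swapI u) := by
  funext j k
  simp only [swapI, subst2, Nat.add_comm k j]
  rw [Finset.sum_comm]
  refine Finset.sum_congr rfl fun n _ => Finset.sum_congr rfl fun m _ => ?_
  rw [fmul_comm, ← swapI_fpow, ← swapI_fpow, ← fmul_swapI]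
  rfl

/-! ### The error `ℰ(q, φ)` -/

lemma d1_vanishesBelow {F : FPS} {d : ℕ} (h : VanishesBelow (d + 1) F) :
    VanishesBelow d (d1 F) := fun m n hmn => by rw [d1, h _ _ (by omega), mul_zero]

lemma d2_vanishesBelow {F : FPS} {d : ℕ} (h : VanishesBelow (d + 1) F) :
    VanishesBelow d (d2 F) := fun m n hmn => by rw [d2, h _ _ (by omega), mul_zero]

lemma d1_eqBelow {F F' : FPS} {N : ℕ} (h : EqBelow (N + 1) F F') :
    EqBelow N (d1 F) (d1 F') := fun m n hmn => by rw [d1, d1, h _ _ (by omega)]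

lemma d2_eqBelow {F F' : FPS} {N : ℕ} (h : EqBelow (N + 1) F F') :
    EqBelow N (d2 F) (d2 F') := fun m n hmn => by rw [d2, d2, h _ _ (by omega)]

lemma d1_hasParity {F : FPS} (h : HasParity 0 F) : HasParity 1 (d1 F) :=
  fun m n hmn => by rw [d1, h _ _ (by omega), mul_zero]

lemma d2_hasParity {F : FPS} (h : HasParity 0 F) : HasParity 1 (d2 F) :=
  fun m n hmn => by rw [d2, h _ _ (by omega), mul_zero]

lemma d1_add_smul (F G : FPS) (s : ℂ) : d1 (F + s • G) = d1 F + s • d1 G := by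
  funext m n
  simp only [d1, Pi.add_apply, Pi.smul_apply, smul_eq_mul]
  ring

lemma d2_add_smul (F G : FPS) (s : ℂ) : d2 (F + s • G) = d2 F + s • d2 G := by
  funext m n
  simp only [d2, Pi.add_apply, Pi.smul_apply, smul_eq_mul]
  ring

lemma swapI_d2 (F : FPS) : swapI (d2 F) = d1 (swapI F) := rfl

lemma swapI_d1 (F : FPS) : swapI (d1 F) = d2 (swapI F) := rfl

lemma swapI_minus (l : ℂ) (f : FPS) : swapI (minus l f) = plus l (swapI f) := rfl

lemma swapI_plus (l : ℂ) (f : FPS) : swapI (plus l f) = minus l (swapI f) := rfl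

lemma swapI_add (f g : FPS) : swapI (f + g) = swapI f + swapI g := rfl

lemma Err_eq (l : ℂ) (q : OPS) (φ : FPS) :
    Err l q φ = subst2 (d2 (Sq q)) (minus l φ) φ + subst2 (d1 (Sq q)) φ (plus l φ) := rfl

lemma Err_apply (l : ℂ) (q : OPS) (φ : FPS) (j k : ℕ) :
    Err l q φ j k = subst2 (d2 (Sq q)) (minus l φ) φ j k
      + subst2 (d1 (Sq q)) φ (plus l φ) j k := rfl

lemma minus_apply_zero_zero (l : ℂ) {f : FPS} (h : f 0 0 = 0) : minus l f 0 0 = 0 := by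
  simp [minus, h]

lemma plus_apply_zero_zero (l : ℂ) {f : FPS} (h : f 0 0 = 0) : plus l f 0 0 = 0 := by
  simp [plus, h]

lemma minus_eqBelow (l : ℂ) {f g : FPS} {N : ℕ} (h : EqBelow N f g) :
    EqBelow N (minus l f) (minus l g) := fun a b hab => by rw [minus, minus, h a b hab]

lemma plus_eqBelow (l : ℂ) {f g : FPS} {N : ℕ} (h : EqBelow N f g) :
    EqBelow N (plus l f) (plus l g) := fun a b hab => by rw [plus, plus, h a b hab]

lemma minus_hasParity (l : ℂ) {f : FPS} {p : ℕ} (h : HasParity p f) :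
    HasParity p (minus l f) := fun a b hab => by rw [minus, h a b hab, mul_zero]

lemma plus_hasParity (l : ℂ) {f : FPS} {p : ℕ} (h : HasParity p f) :
    HasParity p (plus l f) := fun a b hab => by rw [plus, h a b hab, mul_zero]

lemma Err_hasParity (l : ℂ) {q : OPS} {φ : FPS} (hq : ∀ m, m % 2 = 1 → q m = 0)
    (hφ : HasParity 1 φ) : HasParity 1 (Err l q φ) := fun j k hjk => by
  rw [Err_apply,
    subst2_hasParity (d2_hasParity (Sq_hasParity hq)) (minus_hasParity l hφ) hφ j k hjk,
    subst2_hasParity (d1_hasParity (Sq_hasParity hq)) hφ (plus_hasParity l hφ) j k hjk, add_zero]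

lemma swapI_Err (l : ℂ) (q : OPS) {φ : FPS} (hφ : swapI φ = φ) :
    swapI (Err l q φ) = Err l q φ := by
  rw [Err_eq, swapI_add, swapI_subst2, swapI_subst2, swapI_d2, swapI_d1, swapI_minus,
    swapI_plus, swapI_Sq, hφ, add_comm]

lemma Err_swap (l : ℂ) (q : OPS) {φ : FPS} (hφ : swapI φ = φ) (j k : ℕ) :
    Err l q φ k j = Err l q φ j k :=
  congrFun₂ (swapI_Err l q hφ) j k

lemma Err_eqBelow (l : ℂ) {q q' : OPS} {φ φ' : FPS} {N : ℕ} (hq : ∀ m < N + 1, q m = q' m)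
    (hφ₀ : φ 0 0 = 0) (hφ₀' : φ' 0 0 = 0) (hφ : EqBelow N φ φ') :
    EqBelow N (Err l q φ) (Err l q' φ') := fun j k hjk => by
  rw [Err_apply, Err_apply,
    subst2_eqBelow (d2_eqBelow (Sq_eqBelow hq)) (minus_apply_zero_zero l hφ₀)
      (minus_apply_zero_zero l hφ₀') hφ₀ hφ₀' (minus_eqBelow l hφ) hφ j k hjk,
    subst2_eqBelow (d1_eqBelow (Sq_eqBelow hq)) hφ₀ hφ₀' (plus_apply_zero_zero l hφ₀)
      (plus_apply_zero_zero l hφ₀') hφ (plus_eqBelow l hφ) j k hjk]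

/-- The coefficient of `w_{j,k}` in `∂_φℰ(q,φ)(w)` for `w` homogeneous, with `ν = j - k`. -/
def linCoeff (l : ℂ) (q : OPS) (ν : ℤ) : ℂ :=
  Sq q 1 1 * (l ^ ν + l ^ (-ν)) + 2 * Sq q 0 2 + 2 * Sq q 2 0

lemma Err_perturb (l : ℂ) (q : OPS) {φ φ' : FPS} {d : ℕ} (hd : 1 ≤ d) (hφ₀ : φ 0 0 = 0)
    (hφ₀' : φ' 0 0 = 0) (hφ : EqBelow d φ φ') {j k : ℕ} (hjk : j + k = d) :
    Err l q φ' j k = Err l q φ j k + linCoeff l q ((j : ℤ) - k) * (φ' j k - φ j k) := by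
  rw [Err_apply, Err_apply,
    subst2_perturb _ hd (minus_apply_zero_zero l hφ₀) (minus_apply_zero_zero l hφ₀') hφ₀ hφ₀'
      (minus_eqBelow l hφ) hφ hjk,
    subst2_perturb _ hd hφ₀ hφ₀' (plus_apply_zero_zero l hφ₀) (plus_apply_zero_zero l hφ₀') hφ
      (plus_eqBelow l hφ) hjk,
    linCoeff, neg_sub]
  simp only [d1, d2, minus, plus]
  push_cast
  ring

lemma Err_one_zero (l : ℂ) (q : OPS) {φ : FPS} (hφ₀ : φ 0 0 = 0) :
    Err l q φ 1 0 = linCoeff l q 1 * φ 1 0 := by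
  have hzero : Err l q 0 1 0 = 0 := by
    have hm : minus l 0 = 0 := funext₂ fun _ _ => by simp [minus]
    have hp : plus l 0 = 0 := funext₂ fun _ _ => by simp [plus]
    simp [Err_apply, hm, hp, subst2_zero_zero, oneF]
  have := Err_perturb l q (φ := 0) (φ' := φ) le_rfl rfl hφ₀
    (fun j k h => by
      obtain ⟨rfl, rfl⟩ : j = 0 ∧ k = 0 := by omega
      exact hφ₀.symm) (rfl : 1 + 0 = 1)
  simpa [hzero] using this

lemma linCoeff_one (l : ℂ) (q : OPS) : linCoeff l q 1 = Sq q 1 1 * (l + l⁻¹ + 2) - q 0 := by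
  rw [linCoeff, zpow_one, zpow_neg_one]
  linear_combination Sq_degree_two q

lemma linCoeff_neg (l : ℂ) (q : OPS) (ν : ℤ) : linCoeff l q (-ν) = linCoeff l q ν := by
  rw [linCoeff, linCoeff, neg_neg, add_comm (l ^ (-ν))]

lemma linCoeff_sub_linCoeff_one (l : ℂ) (q : OPS) (ν : ℤ) :
    linCoeff l q ν - linCoeff l q 1 = Sq q 1 1 * (l ^ ν + l ^ (-ν) - l - l⁻¹) := by
  rw [linCoeff, linCoeff, zpow_one, zpow_neg_one]
  ring

/-- The coefficient of `s` in `ℰ(q + s t^{d+1}, φ)_{j,k}` for `j + k = d`. -/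
def qCoeff (l : ℂ) (d j k : ℕ) : ℂ :=
  ((d + 1) * (1 / 2) ^ (d + 1)) * d.choose j *
    ((l⁻¹ + 1) ^ j * (1 + l) ^ k + (1 + l) ^ j * (l⁻¹ + 1) ^ k)

lemma Err_add_single (l : ℂ) (q : OPS) {φ : FPS} (hφ₀ : φ 0 0 = 0) (hφ₁₀ : φ 1 0 = 1)
    (hφ₀₁ : φ 0 1 = 1) (s : ℂ) {d j k : ℕ} (hjk : j + k = d) :
    Err l (q + Pi.single (d + 1) s) φ j k = Err l q φ j k + s * qCoeff l d j k := by
  have hm := minus_apply_zero_zero l hφ₀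
  have hp := plus_apply_zero_zero l hφ₀
  have hG := halfSumPowCos_vanishesBelow (d + 1)
  rw [Err_apply, Err_apply, Sq_add_single, d2_add_smul, d1_add_smul, subst2_add_smul,
    subst2_add_smul]
  simp only [Pi.add_apply, Pi.smul_apply, smul_eq_mul]
  rw [subst2_of_binomial (d2_vanishesBelow hG) (fun m n h => d2_halfSumPowCos_top h) hm hφ₀
      (eqBelow_two_lin hm) (eqBelow_two_lin hφ₀) hjk,
    subst2_of_binomial (d1_vanishesBelow hG) (fun m n h => d1_halfSumPowCos_top h) hφ₀ hp
      (eqBelow_two_lin hφ₀) (eqBelow_two_lin hp) hjk]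
  simp only [minus, plus, hφ₁₀, hφ₀₁, qCoeff]
  push_cast
  simp only [zpow_neg_one, zpow_one, mul_one]
  ring

/-! ### Small divisors -/

section NotRootOfUnity

variable {l : ℂ} (hru : ∀ n : ℕ, 0 < n → l ^ n ≠ 1)

include hru

lemma zpow_ne_one_of_not_root {m : ℤ} (hm : m ≠ 0) : l ^ m ≠ 1 := by
  intro h
  apply hru m.natAbs (Int.natAbs_pos.mpr hm)
  rcases Int.natAbs_eq m with e | e
  · rwa [e, zpow_natCast] at h
  · rwa [e, zpow_neg, inv_eq_one, zpow_natCast] at h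

lemma add_one_ne_zero_of_not_root : 1 + l ≠ 0 := fun h => hru 2 two_pos <| by
  rw [show l = -1 by linear_combination h]
  norm_num

variable (hl : l ≠ 0)

include hl

lemma inv_add_one_ne_zero_of_not_root : l⁻¹ + 1 ≠ 0 := by
  rw [show l⁻¹ + 1 = (1 + l) / l by field_simp]
  exact div_ne_zero (add_one_ne_zero_of_not_root hru) hl

lemma zpow_add_zpow_neg_sub_ne_zero {ν : ℤ} (h₁ : ν ≠ 1) (h₂ : ν ≠ -1) :
    l ^ ν + l ^ (-ν) - l - l⁻¹ ≠ 0 := by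
  have hX : l ^ ν ≠ 0 := zpow_ne_zero ν hl
  have hsub : l ^ ν - l ≠ 0 := fun h => zpow_ne_one_of_not_root hru (sub_ne_zero.mpr h₁) <| by
    rw [zpow_sub_one₀ hl, show l ^ ν = l by linear_combination h, mul_inv_cancel₀ hl]
  have hadd : l ^ ν - l⁻¹ ≠ 0 := fun h =>
      zpow_ne_one_of_not_root hru (by omega : ν + 1 ≠ 0) <| by
    rw [zpow_add_one₀ hl, show l ^ ν = l⁻¹ by linear_combination h, inv_mul_cancel₀ hl]
  rw [show l ^ ν + l ^ (-ν) - l - l⁻¹ = (l ^ ν - l) * (l ^ ν - l⁻¹) / l ^ ν by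
    rw [zpow_neg]; field_simp; ring]
  exact div_ne_zero (mul_ne_zero hsub hadd) hX

lemma linCoeff_ne_zero {q : OPS} (hq : q 0 = 1) (h₁ : linCoeff l q 1 = 0) {ν : ℤ}
    (hν₁ : ν ≠ 1) (hν₂ : ν ≠ -1) : linCoeff l q ν ≠ 0 := by
  have hS : Sq q 1 1 ≠ 0 := by
    intro h
    have := linCoeff_one l q
    rw [h₁, h, hq] at this
    norm_num at this
  have := linCoeff_sub_linCoeff_one l q ν
  rw [h₁, sub_zero] at this
  rw [this]
  exact mul_ne_zero hS (zpow_add_zpow_neg_sub_ne_zero hru hl hν₁ hν₂)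

lemma qCoeff_ne_zero (n : ℕ) : qCoeff l (2 * n + 1) (n + 1) n ≠ 0 := by
  have ha := inv_add_one_ne_zero_of_not_root hru hl
  have hb := add_one_ne_zero_of_not_root hru
  have hsum : l⁻¹ + 1 + (1 + l) ≠ 0 := by
    rw [show l⁻¹ + 1 + (1 + l) = (1 + l) ^ 2 / l by field_simp]
    exact div_ne_zero (pow_ne_zero 2 hb) hl
  rw [qCoeff, show (l⁻¹ + 1) ^ (n + 1) * (1 + l) ^ n + (1 + l) ^ (n + 1) * (l⁻¹ + 1) ^ n
    = (l⁻¹ + 1) ^ n * (1 + l) ^ n * (l⁻¹ + 1 + (1 + l)) by ring]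
  have hc : ((2 * n + 1 : ℕ) : ℂ) + 1 ≠ 0 := by exact_mod_cast Nat.succ_ne_zero (2 * n + 1)
  have hch : ((2 * n + 1).choose (n + 1) : ℂ) ≠ 0 := by
    exact_mod_cast (Nat.choose_pos (by omega)).ne'
  exact mul_ne_zero (mul_ne_zero (mul_ne_zero hc (by norm_num)) hch)
    (mul_ne_zero (mul_ne_zero (pow_ne_zero _ ha) (pow_ne_zero _ hb)) hsum)

end NotRootOfUnity

/-! ### The construction -/

structure Admissible (q : OPS) (φ : FPS) : Prop where
  q_zero : q 0 = 1
  q_odd : ∀ m, m % 2 = 1 → q m = 0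
  φ_odd : HasParity 1 φ
  φ_symm : swapI φ = φ
  φ_one_zero : φ 1 0 = 1
  φ_zero_one : φ 0 1 = 1

lemma Admissible.φ_zero_zero {q : OPS} {φ : FPS} (h : Admissible q φ) : φ 0 0 = 0 :=
  h.φ_odd 0 0 (by norm_num)

def qStep (l : ℂ) (q : OPS) (φ : FPS) (n : ℕ) : OPS :=
  q + Pi.single (2 * n + 2) (-Err l q φ (n + 1) n / qCoeff l (2 * n + 1) (n + 1) n)

def φStep (l : ℂ) (q : OPS) (φ : FPS) (d : ℕ) : FPS :=
  φ + fun j k => if j + k = d then -Err l q φ j k / linCoeff l q ((j : ℤ) - k) else 0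

lemma qStep_apply_of_ne (l : ℂ) (q : OPS) (φ : FPS) {n m : ℕ} (hm : m ≠ 2 * n + 2) :
    qStep l q φ n m = q m := by
  simp [qStep, hm]

lemma φStep_apply_of_ne (l : ℂ) (q : OPS) (φ : FPS) {d j k : ℕ} (h : j + k ≠ d) :
    φStep l q φ d j k = φ j k := by
  simp [φStep, h]

lemma admissible_φStep {l : ℂ} {q : OPS} {φ : FPS} {d : ℕ} (h : Admissible q φ)
    (hd : d % 2 = 1) (hE₁ : Err l q φ 1 0 = 0) : Admissible q (φStep l q φ d) := by
  have hE₁' : Err l q φ 0 1 = 0 := (Err_swap l q h.φ_symm 1 0).trans hE₁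
  refine ⟨h.q_zero, h.q_odd, fun j k hjk => ?_, ?_, ?_, ?_⟩
  · rw [φStep_apply_of_ne l q φ (by omega), h.φ_odd j k hjk]
  · funext j k
    have hν : ((k : ℤ) - j) = -((j : ℤ) - k) := by ring
    simp only [swapI, φStep, Pi.add_apply, Nat.add_comm k j, Err_swap l q h.φ_symm, hν,
      linCoeff_neg]
    rw [show φ k j = φ j k from congrFun₂ h.φ_symm j k]
  · simp [φStep, hE₁, h.φ_one_zero]
  · simp [φStep, hE₁', h.φ_zero_one]

lemma Err_φStep_of_degree {l : ℂ} {q : OPS} {φ : FPS} {d j k : ℕ} (hd : 1 ≤ d)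
    (hφ₀ : φ 0 0 = 0) (hjk : j + k = d)
    (hEL : Err l q φ j k = 0 ∨ linCoeff l q ((j : ℤ) - k) ≠ 0) :
    Err l q (φStep l q φ d) j k = 0 := by
  have hφ : EqBelow d φ (φStep l q φ d) := fun a b h =>
    (φStep_apply_of_ne l q φ (by omega)).symm
  rw [Err_perturb l q hd hφ₀ ((hφ 0 0 (by omega)).symm.trans hφ₀) hφ hjk]
  simp only [φStep, Pi.add_apply, if_pos hjk, add_sub_cancel_left]
  rcases hEL with hE | hL
  · rw [hE]; ring
  · field_simp; ring

def approx (l : ℂ) : ℕ → OPS × FPS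
  | 0 => (Pi.single 0 1, lin 1 1)
  | n + 1 =>
    let q := qStep l (approx l n).1 (approx l n).2 n
    (q, φStep l q (approx l n).2 (2 * n + 1))

lemma approx_succ_fst (l : ℂ) (n : ℕ) {m : ℕ} (hm : m ≠ 2 * n + 2) :
    (approx l (n + 1)).1 m = (approx l n).1 m :=
  qStep_apply_of_ne l _ _ hm

lemma approx_succ_snd (l : ℂ) (n : ℕ) {j k : ℕ} (h : j + k ≠ 2 * n + 1) :
    (approx l (n + 1)).2 j k = (approx l n).2 j k :=
  φStep_apply_of_ne l _ _ h

lemma approx_fst_stable (l : ℂ) {n N m : ℕ} (hn : n ≤ N) (hm : m ≤ 2 * n + 1) :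
    (approx l N).1 m = (approx l n).1 m := by
  induction N, hn using Nat.le_induction with
  | base => rfl
  | succ N hN ih => rw [approx_succ_fst l N (by omega), ih]

lemma approx_snd_stable (l : ℂ) {n N j k : ℕ} (hn : n ≤ N) (h : j + k ≤ 2 * n) :
    (approx l N).2 j k = (approx l n).2 j k := by
  induction N, hn using Nat.le_induction with
  | base => rfl
  | succ N hN ih => rw [approx_succ_snd l N (by omega), ih]

/-- `q_m` is fixed from stage `m` on, and `φ_{j,k}` from stage `j + k` on. -/
def qLim (l : ℂ) : OPS := fun m => (approx l m).1 m

def φLim (l : ℂ) : FPS := fun j k => (approx l (j + k)).2 j k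

section Construction

variable {l : ℂ} (hru : ∀ n : ℕ, 0 < n → l ^ n ≠ 1) (hl : l ≠ 0)
include hru hl

lemma qStep_spec {q : OPS} {φ : FPS} {n : ℕ} (h : Admissible q φ)
    (hE : VanishesBelow (2 * n + 1) (Err l q φ)) :
    Admissible (qStep l q φ n) φ ∧ VanishesBelow (2 * n + 1) (Err l (qStep l q φ n) φ) ∧
      Err l (qStep l q φ n) φ (n + 1) n = 0 := by
  have hq : ∀ m, m % 2 = 1 → qStep l q φ n m = q m := fun m hm =>
    qStep_apply_of_ne l q φ (by omega)
  refine ⟨⟨?_, fun m hm => (hq m hm).trans (h.q_odd m hm), h.φ_odd, h.φ_symm, h.φ_one_zero,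
    h.φ_zero_one⟩, fun j k hjk => ?_, ?_⟩
  · rw [qStep_apply_of_ne l q φ (by omega : 0 ≠ 2 * n + 2), h.q_zero]
  · rw [← Err_eqBelow l (fun m hm => (qStep_apply_of_ne l q φ (by omega)).symm)
      h.φ_zero_zero h.φ_zero_zero (fun _ _ _ => rfl) j k hjk]
    exact hE j k hjk
  · rw [qStep, Err_add_single l q h.φ_zero_zero h.φ_one_zero h.φ_zero_one _
      (by omega : n + 1 + n = 2 * n + 1),
      div_mul_cancel₀ _ (qCoeff_ne_zero hru hl n), add_neg_cancel]

lemma Err_eq_zero_or_linCoeff_ne_zero {q : OPS} {φ : FPS} {n : ℕ} (h : Admissible q φ)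
    (hE₁ : Err l q φ 1 0 = 0) (hmid : Err l q φ (n + 1) n = 0) {j k : ℕ}
    (hjk : j + k = 2 * n + 1) :
    Err l q φ j k = 0 ∨ linCoeff l q ((j : ℤ) - k) ≠ 0 := by
  have hL₁ : linCoeff l q 1 = 0 := by
    rw [Err_one_zero l q h.φ_zero_zero, h.φ_one_zero, mul_one] at hE₁
    exact hE₁
  by_cases hj : j = n + 1
  · subst hj
    obtain rfl : k = n := by omega
    exact Or.inl hmid
  by_cases hk : k = n + 1
  · subst hk
    obtain rfl : j = n := by omega
    exact Or.inl ((Err_swap l q h.φ_symm _ _).trans hmid)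
  exact Or.inr (linCoeff_ne_zero hru hl h.q_zero hL₁ (by omega) (by omega))

lemma φStep_spec {q : OPS} {φ : FPS} {n : ℕ} (h : Admissible q φ)
    (hE : VanishesBelow (2 * n + 1) (Err l q φ)) (hmid : Err l q φ (n + 1) n = 0) :
    Admissible q (φStep l q φ (2 * n + 1)) ∧
      VanishesBelow (2 * n + 3) (Err l q (φStep l q φ (2 * n + 1))) := by
  have hE₁ : Err l q φ 1 0 = 0 := by
    rcases Nat.eq_zero_or_pos n with rfl | hn
    · exact hmid
    · exact hE 1 0 (by omega)
  have h' := admissible_φStep (d := 2 * n + 1) h (by omega) hE₁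
  refine ⟨h', fun j k hjk => ?_⟩
  rcases lt_trichotomy (j + k) (2 * n + 1) with hlt | heq | hgt
  · rw [← Err_eqBelow l (fun _ _ => rfl) h.φ_zero_zero h'.φ_zero_zero
      (fun a b hab => (φStep_apply_of_ne l q φ (by omega)).symm) j k hlt]
    exact hE j k hlt
  · exact Err_φStep_of_degree (by omega) h.φ_zero_zero heq
      (Err_eq_zero_or_linCoeff_ne_zero hru hl h hE₁ hmid heq)
  · exact Err_hasParity l h'.q_odd h'.φ_odd j k (by omega)

lemma approx_spec (n : ℕ) :
    Admissible (approx l n).1 (approx l n).2 ∧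
      VanishesBelow (2 * n + 1) (Err l (approx l n).1 (approx l n).2) := by
  induction n with
  | zero =>
    have h : Admissible (Pi.single 0 1) (lin 1 1) := by
      refine ⟨by simp, fun m hm => Pi.single_eq_of_ne (by omega) _, fun j k hjk => ?_,
        funext₂ fun j k => ?_, by simp [lin], by simp [lin]⟩
      · simp only [lin]
        rw [if_neg (by omega), if_neg (by omega)]
      · simp only [swapI, lin]
        split_ifs <;> first | rfl | omega
    exact ⟨h, fun j k hjk => Err_hasParity l h.q_odd h.φ_odd j k (by omega)⟩
  | succ n ih =>
    obtain ⟨h, hE⟩ := ih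
    obtain ⟨h', hE', hmid⟩ := qStep_spec hru hl h hE
    exact φStep_spec hru hl h' hE' hmid

lemma Err_lim : Err l (qLim l) (φLim l) = 0 := by
  funext j k
  have hN := approx_spec hru hl (j + k + 1)
  have hφ₀ : φLim l 0 0 = 0 := (approx_spec hru hl 0).1.φ_zero_zero
  have hq : ∀ m < j + k + 1 + 1, qLim l m = (approx l (j + k + 1)).1 m := fun m hm =>
    (approx_fst_stable l (by omega) (by omega)).symm
  have hφ : EqBelow (j + k + 1) (φLim l) (approx l (j + k + 1)).2 := fun a b hab =>
    (approx_snd_stable l (by omega) (by omega)).symm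
  rw [Err_eqBelow l hq hφ₀ hN.1.φ_zero_zero hφ j k (by omega)]
  exact hN.2 j k (by omega)

end Construction

/-- (Treschev) If `λ` is on the unit circle and not a root of unity, then
there exist an even formal series `q` with `q₀ = 1` and a symmetric normalized odd series
`φ = z + z̄ + O₃` solving `ℰ(q,φ) = 0` formally. -/
theorem treschev_formal_solution
    (l : ℂ) (hl : ‖l‖ = 1) (hru : ∀ n : ℕ, 0 < n → l ^ n ≠ 1) :
    ∃ q : OPS, ∃ φ : FPS,
      q 0 = 1 ∧ (∀ m : ℕ, Odd m → q m = 0) ∧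
      (∀ j k : ℕ, Even (j + k) → φ j k = 0) ∧
      (∀ j k : ℕ, φ j k = φ k j) ∧
      φ 1 0 = 1 ∧ φ 0 1 = 1 ∧
      Err l q φ = 0 := by
  have hl0 : l ≠ 0 := norm_ne_zero_iff.mp (hl ▸ one_ne_zero)
  have spec := fun n => (approx_spec hru hl0 n).1
  refine ⟨qLim l, φLim l, (spec 0).q_zero, fun m hm => (spec m).q_odd m (Nat.odd_iff.mp hm),
    fun j k hjk => (spec (j + k)).φ_odd j k (by rw [Nat.even_iff.mp hjk]; norm_num),
    fun j k => ?_, (spec 1).φ_one_zero, (spec 1).φ_zero_one, Err_lim hru hl0⟩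
  rw [φLim, φLim, Nat.add_comm k j]
  exact (congrFun₂ (spec (j + k)).φ_symm j k).symm

end Treschev

end
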